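/- For all t₁, t₂ ∈ [0,1/2] and x ∈ C, T(t₁)(T(t₂)x) = T(t₁+t₂)x. -/

import Mathlib

open Set

noncomputable section

/-- `Ω = {−1} ∪ [0,∞)`. -/
def Omega : Set ℝ := {-1} ∪ Set.Ici 0

/-- Membership in the set `C`: `x` takes values in `[0,1]` on `Ω`
and is 1-Lipschitz on `[0,∞)`. -/
def memC (x : ℝ → ℝ) : Prop :=
  (∀ u ∈ Omega, x u ∈ Set.Icc (0:ℝ) 1) ∧
  ∀ u₁ ∈ Set.Ici (0:ℝ), ∀ u₂ ∈ Set.Ici (0:ℝ), |x u₁ - x u₂| ≤ |u₁ - u₂|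

/-- `α_x(r) = sup { x s : s ∈ {−1} ∪ [r,∞) }`. -/
def alphaF (x : ℝ → ℝ) (r : ℝ) : ℝ := sSup (x '' ({-1} ∪ Set.Ici r))

/-- The semigroup map `T(t)` for `t ∈ [0,1]`:
`(T(t)x)(−1) = x(−1)`, `(T(t)x)(u) = x(u−t)` for `u ≥ t`, and for `0 ≤ u ≤ t`
the three-case definition via `α_x`. -/
def T (t : ℝ) (x : ℝ → ℝ) : ℝ → ℝ := fun u =>
  if u = -1 then x (-1)
  else if t ≤ u then x (u - t)
  else if 1 - alphaF x (1 - t + u) ≤ x 0 - t + u then x 0 - t + u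
  else if x 0 + t - u ≤ 1 - alphaF x (1 - t + u) then x 0 + t - u
  else 1 - alphaF x (1 - t + u)

/-- The supremum distance over `Ω`. -/
def supDist (x y : ℝ → ℝ) : ℝ := sSup ((fun u => |x u - y u|) '' Omega)


/-!
Off the boundary layer `[0, t)` the map `T(t)` is a right shift, and on it, at depth
`s = t - u`, it is the projection of `1 - α_x(1 - s)` onto `[x 0 - s, x 0 + s]`.
Shifting by `t` turns `α_{T(t)x}(r)` into `α_x(r - t)`, so for `u < t₁` the composite is a projection onto
an interval of radius `s` around a projection onto one of radius `t₂`. Two such projections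
collapse into one of radius `t₂ + s` as soon as the two projected values `a ≤ b` satisfy
`b ≤ a + s`, and this holds because `α_x` is antitone and, `x` being 1-Lipschitz, decreases
with slope at most 1.
-/

def clampAround (c r v : ℝ) : ℝ := max (c - r) (min v (c + r))

lemma clampAround_clampAround {a b c r s : ℝ} (hr : 0 ≤ r) (hab : a ≤ b) (hba : b ≤ a + s) :
    clampAround (clampAround c r b) s a = clampAround c (r + s) a := by
  simp only [clampAround, max_def, min_def]
  split_ifs <;> linarith

lemma T_neg_one (t : ℝ) (x : ℝ → ℝ) : T t x (-1) = x (-1) := if_pos rfl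

lemma T_of_le {t u : ℝ} (x : ℝ → ℝ) (ht : 0 ≤ t) (hu : t ≤ u) : T t x u = x (u - t) := by
  rw [T, if_neg (by linarith), if_pos hu]

lemma T_sub {t s : ℝ} (x : ℝ → ℝ) (hs : 0 ≤ s) (hst : s ≤ t) :
    T t x (t - s) = clampAround (x 0) s (1 - alphaF x (1 - s)) := by
  rcases hs.eq_or_lt with rfl | hs
  · simp [T_of_le x hst le_rfl, clampAround]
  · have e₁ : 1 - t + (t - s) = 1 - s := by ring
    have e₂ : x 0 - t + (t - s) = x 0 - s := by ring
    have e₃ : x 0 + t - (t - s) = x 0 + s := by ring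
    rw [T, if_neg (by linarith), if_neg (by linarith), e₁, e₂, e₃, clampAround]
    split_ifs <;> simp only [max_def, min_def] <;> split_ifs <;> linarith

lemma alphaF_T {t r : ℝ} (x : ℝ → ℝ) (ht : 0 ≤ t) (htr : t ≤ r) :
    alphaF (T t x) r = alphaF x (r - t) := by
  have hshift : EqOn (T t x) (fun s => x (s - t)) (Ici r) :=
    fun s hs => T_of_le x ht (htr.trans hs)
  rw [alphaF, alphaF, image_union, image_union, image_singleton, image_singleton, T_neg_one,
    hshift.image_eq, ← image_image x (· - t), image_sub_const_Ici]

section alphaF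

variable {x : ℝ → ℝ} {r r₁ r₂ s : ℝ}

lemma bddAbove_image_of_memC (hx : memC x) (hr : 0 ≤ r) :
    BddAbove (x '' ({-1} ∪ Ici r)) := by
  refine ⟨1, ?_⟩
  rintro _ ⟨s, hs, rfl⟩
  exact (hx.1 s (hs.imp id hr.trans)).2

lemma le_alphaF (hx : memC x) (hr : 0 ≤ r) (hs : s ∈ ({-1} ∪ Ici r : Set ℝ)) :
    x s ≤ alphaF x r :=
  le_csSup (bddAbove_image_of_memC hx hr) (mem_image_of_mem x hs)

lemma alphaF_antitone (hx : memC x) (h₀ : 0 ≤ r₁) (h : r₁ ≤ r₂) :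
    alphaF x r₂ ≤ alphaF x r₁ :=
  csSup_le_csSup (bddAbove_image_of_memC hx h₀) ⟨x (-1), mem_image_of_mem x (Or.inl rfl)⟩
    (image_mono (union_subset_union_right _ (Ici_subset_Ici.mpr h)))

lemma alphaF_le_add_sub (hx : memC x) (h₀ : 0 ≤ r₁) (h : r₁ ≤ r₂) :
    alphaF x r₁ ≤ alphaF x r₂ + (r₂ - r₁) := by
  have h₂ : 0 ≤ r₂ := h₀.trans h
  refine csSup_le ⟨x (-1), mem_image_of_mem x (Or.inl rfl)⟩ ?_
  rintro _ ⟨s, rfl | hs, rfl⟩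
  · linarith [le_alphaF hx h₂ (Or.inl rfl)]
  · rcases le_or_gt r₂ s with hs₂ | hs₂
    · linarith [le_alphaF hx h₂ (Or.inr hs₂)]
    · have hlip : |x s - x r₂| ≤ |s - r₂| := hx.2 s (h₀.trans hs) r₂ h₂
      rw [abs_of_neg (by linarith : s - r₂ < 0)] at hlip
      linarith [le_abs_self (x s - x r₂), le_alphaF hx h₂ (Or.inr self_mem_Ici), mem_Ici.mp hs]

end alphaF

/-- for `t₁, t₂ ∈ [0,1/2]` and `x ∈ C`,
`T(t₁)(T(t₂)x) = T(t₁+t₂)x` (as functions on `Ω`). -/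
theorem stmt_9 (t₁ t₂ : ℝ) (ht₁ : t₁ ∈ Set.Icc (0:ℝ) (1/2)) (ht₂ : t₂ ∈ Set.Icc (0:ℝ) (1/2))
    (x : ℝ → ℝ) (hx : memC x) :
    ∀ u ∈ Omega, T t₁ (T t₂ x) u = T (t₁ + t₂) x u := by
  obtain ⟨h₁, h₁'⟩ := ht₁
  obtain ⟨h₂, h₂'⟩ := ht₂
  rintro u (rfl | hu)
  · simp only [T_neg_one]
  rw [mem_Ici] at hu
  rcases le_or_gt (t₁ + t₂) u with hu₁₂ | hu₁₂
  · rw [T_of_le _ h₁ (by linarith), T_of_le x h₂ (by linarith), T_of_le x (by linarith) hu₁₂,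
      sub_sub, add_comm t₁]
  obtain ⟨s, hs, rfl⟩ : ∃ s, 0 < s ∧ u = t₁ + t₂ - s := ⟨t₁ + t₂ - u, by linarith, by ring⟩
  rw [T_sub x hs.le (by linarith)]
  rcases le_or_gt s t₂ with hst₂ | hst₂
  · rw [T_of_le _ h₁ (by linarith), add_sub_assoc, add_sub_cancel_left, T_sub x hs.le hst₂]
  · obtain ⟨s₁, hs₁, rfl⟩ : ∃ s₁, 0 < s₁ ∧ s = t₂ + s₁ := ⟨s - t₂, by linarith, by ring⟩
    have hdepth : t₁ + t₂ - (t₂ + s₁) = t₁ - s₁ := by ring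
    have hT₀ : T t₂ x 0 = clampAround (x 0) t₂ (1 - alphaF x (1 - t₂)) := by
      simpa only [sub_self] using T_sub x h₂ le_rfl
    rw [hdepth, T_sub _ hs₁.le (by linarith), alphaF_T x h₂ (by linarith), hT₀, sub_sub, add_comm s₁]
    refine clampAround_clampAround h₂ ?_ ?_
    · linarith [alphaF_antitone hx (by linarith : 0 ≤ 1 - (t₂ + s₁)) (by linarith : _ ≤ 1 - t₂)]
    · linarith [alphaF_le_add_sub hx (by linarith : 0 ≤ 1 - (t₂ + s₁)) (by linarith : _ ≤ 1 - t₂)]
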